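/- arXiv:2401.13367 — 6 statements merged into one kernel-verified Lean document; each statement's English description precedes it below -/
import Mathlib

section
/- The Furstenberg family of subsets of the positive integers with positive upper Banach density coincides with the family of sets A for which there exists a Banach limit m on bounded real sequences with m(1_A) > 0. -/
/-- A sequence of reals is bounded. -/
def IsBddSeq (f : ℕ → ℝ) : Prop := ∃ C, ∀ n, |f n| ≤ C

/-- A Banach limit: a positive, shift-invariant, normalized linear functional
on the space of bounded real sequences. -/
structure BanachLimit where
  toFun : (ℕ → ℝ) → ℝ
  map_add' : ∀ f g, IsBddSeq f → IsBddSeq g → toFun (f + g) = toFun f + toFun g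
  map_smul' : ∀ (c : ℝ) (f), IsBddSeq f → toFun (c • f) = c * toFun f
  pos' : ∀ f, IsBddSeq f → (∀ n, 0 ≤ f n) → 0 ≤ toFun f
  shift_invariant' : ∀ f, IsBddSeq f → toFun (fun n => f (n + 1)) = toFun f
  map_one' : toFun (fun _ => 1) = 1

/-- The indicator sequence of a set of naturals. -/
noncomputable def indSeq (A : Set ℕ) : ℕ → ℝ := A.indicator (fun _ => 1)

/-- Upper Banach density of a set of naturals:
`limsup_{N→∞} sup_{m≥0} #(A ∩ [m+1, m+N]) / N`. -/
noncomputable def upperBanachDensity (A : Set ℕ) : ℝ :=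
  Filter.limsup
    (fun N : ℕ => ⨆ m : ℕ, ((A ∩ Set.Ioc m (m + N)).ncard : ℝ) / N)
    Filter.atTop

open Filter Finset Topology

noncomputable def avgS (f : ℕ → ℝ) (m N : ℕ) : ℝ :=
  (∑ k ∈ Finset.range N, f (m + 1 + k)) / N

lemma indSeq_nonneg (A : Set ℕ) (n : ℕ) : 0 ≤ indSeq A n :=
  Set.indicator_nonneg (fun _ _ => zero_le_one) n

lemma indSeq_le_one (A : Set ℕ) (n : ℕ) : indSeq A n ≤ 1 := by
  unfold indSeq
  by_cases h : n ∈ A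
  · simp [Set.indicator_of_mem h]
  · simp [Set.indicator_of_notMem h]

lemma isBddSeq_indSeq (A : Set ℕ) : IsBddSeq (indSeq A) :=
  ⟨1, fun n => abs_le.2 ⟨by linarith [indSeq_nonneg A n], indSeq_le_one A n⟩⟩

lemma IsBddSeq.add {f g : ℕ → ℝ} (hf : IsBddSeq f) (hg : IsBddSeq g) : IsBddSeq (f + g) := by
  obtain ⟨C, hC⟩ := hf; obtain ⟨D, hD⟩ := hg
  exact ⟨C + D, fun n => (abs_add_le _ _).trans (add_le_add (hC n) (hD n))⟩

lemma IsBddSeq.smul {f : ℕ → ℝ} (c : ℝ) (hf : IsBddSeq f) : IsBddSeq (c • f) := by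
  obtain ⟨C, hC⟩ := hf
  exact ⟨|c| * C, fun n => by
    simp only [Pi.smul_apply, smul_eq_mul, abs_mul]
    exact mul_le_mul_of_nonneg_left (hC n) (abs_nonneg c)⟩

lemma IsBddSeq.comp {f : ℕ → ℝ} (φ : ℕ → ℕ) (hf : IsBddSeq f) :
    IsBddSeq (fun n => f (φ n)) := by
  obtain ⟨C, hC⟩ := hf
  exact ⟨C, fun n => hC (φ n)⟩

lemma isBddSeq_const (c : ℝ) : IsBddSeq (fun _ => c) := ⟨|c|, fun _ => le_rfl⟩

lemma isBddSeq_winsum {f : ℕ → ℝ} (hf : IsBddSeq f) (N : ℕ) :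
    IsBddSeq (fun n => ∑ k ∈ Finset.range N, f (n + 1 + k)) := by
  obtain ⟨C, hC⟩ := hf
  refine ⟨N * C, fun n => ?_⟩
  calc |∑ k ∈ Finset.range N, f (n + 1 + k)| ≤ ∑ k ∈ Finset.range N, |f (n + 1 + k)| :=
        Finset.abs_sum_le_sum_abs _ _
    _ ≤ ∑ _k ∈ Finset.range N, C := Finset.sum_le_sum fun k _ => hC _
    _ = N * C := by simp [mul_comm]

lemma ncard_eq_sum (A : Set ℕ) (n N : ℕ) :
    ((A ∩ Set.Ioc n (n + N)).ncard : ℝ) = ∑ k ∈ Finset.range N, indSeq A (n + 1 + k) := by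
  classical
  have h1 : A ∩ Set.Ioc n (n + N) =
      ↑((Finset.Ico (n + 1) (n + N + 1)).filter (· ∈ A)) := by
    ext x
    simp only [Set.mem_inter_iff, Set.mem_Ioc, Finset.coe_filter, Finset.mem_Ico,
      Set.mem_setOf_eq]
    constructor
    · rintro ⟨hA, h1, h2⟩; exact ⟨⟨by omega, by omega⟩, hA⟩
    · rintro ⟨⟨h1, h2⟩, hA⟩; exact ⟨hA, by omega, by omega⟩
  rw [h1, Set.ncard_coe_finset, Finset.card_filter, Finset.sum_Ico_eq_sum_range]
  have h2 : n + N + 1 - (n + 1) = N := by omega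
  rw [h2]
  push_cast
  refine Finset.sum_congr rfl fun k _ => ?_
  simp [indSeq, Set.indicator_apply]

lemma avgS_ind (A : Set ℕ) (n N : ℕ) :
    avgS (indSeq A) n N = ((A ∩ Set.Ioc n (n + N)).ncard : ℝ) / N := by
  rw [avgS, ncard_eq_sum]

lemma avgS_add (f g : ℕ → ℝ) (m N : ℕ) :
    avgS (f + g) m N = avgS f m N + avgS g m N := by
  simp only [avgS, Pi.add_apply, Finset.sum_add_distrib, add_div]

lemma avgS_smul (c : ℝ) (f : ℕ → ℝ) (m N : ℕ) :
    avgS (c • f) m N = c * avgS f m N := by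
  simp only [avgS, Pi.smul_apply, smul_eq_mul, ← Finset.mul_sum, mul_div_assoc]

lemma avgS_nonneg {f : ℕ → ℝ} (hf : ∀ n, 0 ≤ f n) (m N : ℕ) : 0 ≤ avgS f m N :=
  div_nonneg (Finset.sum_nonneg fun k _ => hf _) (Nat.cast_nonneg N)

lemma abs_avgS_le {f : ℕ → ℝ} {C : ℝ} (hC : ∀ n, |f n| ≤ C) (m N : ℕ) :
    |avgS f m N| ≤ C := by
  have hC0 : 0 ≤ C := (abs_nonneg _).trans (hC 0)
  rcases Nat.eq_zero_or_pos N with h | h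
  · simp [avgS, h, hC0]
  · have hN : (0 : ℝ) < N := by exact_mod_cast h
    rw [avgS, abs_div, abs_of_nonneg (le_of_lt hN), div_le_iff₀ hN]
    calc |∑ k ∈ Finset.range N, f (m + 1 + k)| ≤ ∑ k ∈ Finset.range N, |f (m + 1 + k)| :=
          Finset.abs_sum_le_sum_abs _ _
      _ ≤ ∑ _k ∈ Finset.range N, C := Finset.sum_le_sum fun k _ => hC _
      _ = C * N := by simp [mul_comm]

lemma avgS_shift_sub (f : ℕ → ℝ) (m N : ℕ) :
    avgS (fun n => f (n + 1)) m N - avgS f m N = (f (m + 1 + N) - f (m + 1)) / N := by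
  unfold avgS
  rw [div_sub_div_same, ← Finset.sum_sub_distrib]
  congr 1
  have h := Finset.sum_range_sub (fun k => f (m + 1 + k)) N
  simpa [add_assoc] using h

lemma BL_shift_k (BL : BanachLimit) {f : ℕ → ℝ} (hf : IsBddSeq f) (k : ℕ) :
    BL.toFun (fun n => f (n + k)) = BL.toFun f := by
  induction k with
  | zero => rfl
  | succ k ih =>
    have h1 : IsBddSeq (fun n => f (n + k)) := hf.comp _
    have h3 := BL.shift_invariant' (fun n => f (n + k)) h1
    have h4 : (fun n => f (n + 1 + k)) = (fun n => f (n + (k + 1))) :=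
      funext fun n => by congr 1; omega
    rw [← h4, h3, ih]

lemma BL_zero (BL : BanachLimit) : BL.toFun (fun _ => (0 : ℝ)) = 0 := by
  have h := BL.map_smul' 0 (fun _ => (0 : ℝ)) (isBddSeq_const 0)
  have h2 : (0 : ℝ) • (fun _ => (0 : ℝ)) = (fun _ : ℕ => (0 : ℝ)) := by
    funext n; simp
  rw [h2] at h
  simpa using h

lemma BL_winsum (BL : BanachLimit) {f : ℕ → ℝ} (hf : IsBddSeq f) (N : ℕ) :
    BL.toFun (fun n => ∑ k ∈ Finset.range N, f (n + 1 + k)) = N * BL.toFun f := by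
  induction N with
  | zero => simpa using BL_zero BL
  | succ N ih =>
    have hsplit : (fun n => ∑ k ∈ Finset.range (N + 1), f (n + 1 + k)) =
        (fun n => ∑ k ∈ Finset.range N, f (n + 1 + k)) + (fun n => f (n + (1 + N))) := by
      funext n
      simp only [Pi.add_apply, Finset.sum_range_succ]
      congr 2
      omega
    rw [hsplit, BL.map_add' _ _ (isBddSeq_winsum hf N) (hf.comp _), ih,
      BL_shift_k BL hf (1 + N)]
    push_cast
    ring

lemma ncard_le (A : Set ℕ) (m N : ℕ) : ((A ∩ Set.Ioc m (m + N)).ncard : ℝ) ≤ N := by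
  have h1 : (A ∩ Set.Ioc m (m + N)).ncard ≤ (Set.Ioc m (m + N)).ncard :=
    Set.ncard_le_ncard Set.inter_subset_right (Set.finite_Ioc _ _)
  have h2 : (Set.Ioc m (m + N)).ncard = N := by
    rw [← Finset.coe_Ioc, Set.ncard_coe_finset, Nat.card_Ioc]
    omega
  exact_mod_cast h1.trans_eq h2

lemma term_nonneg (A : Set ℕ) (m N : ℕ) : 0 ≤ ((A ∩ Set.Ioc m (m + N)).ncard : ℝ) / N :=
  div_nonneg (Nat.cast_nonneg _) (Nat.cast_nonneg _)

lemma term_le_one (A : Set ℕ) (m N : ℕ) : ((A ∩ Set.Ioc m (m + N)).ncard : ℝ) / N ≤ 1 := by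
  rcases Nat.eq_zero_or_pos N with h | h
  · simp [h]
  · have hN : (0 : ℝ) < N := by exact_mod_cast h
    rw [div_le_one hN]
    exact ncard_le A m N

lemma term_bddAbove (A : Set ℕ) (N : ℕ) :
    BddAbove (Set.range fun m => ((A ∩ Set.Ioc m (m + N)).ncard : ℝ) / N) := by
  refine ⟨1, ?_⟩
  rintro x ⟨m, rfl⟩
  exact term_le_one A m N

lemma u_le_one (A : Set ℕ) (N : ℕ) :
    (⨆ m : ℕ, ((A ∩ Set.Ioc m (m + N)).ncard : ℝ) / N) ≤ 1 :=
  ciSup_le fun m => term_le_one A m N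

lemma u_nonneg (A : Set ℕ) (N : ℕ) :
    0 ≤ ⨆ m : ℕ, ((A ∩ Set.Ioc m (m + N)).ncard : ℝ) / N :=
  (term_nonneg A 0 N).trans (le_ciSup (term_bddAbove A N) 0)

lemma BL_le_u (BL : BanachLimit) (A : Set ℕ) (N : ℕ) (hN : 1 ≤ N) :
    BL.toFun (indSeq A) ≤ ⨆ m : ℕ, ((A ∩ Set.Ioc m (m + N)).ncard : ℝ) / N := by
  set u := ⨆ m : ℕ, ((A ∩ Set.Ioc m (m + N)).ncard : ℝ) / N with hu
  have hNpos : (0 : ℝ) < N := by exact_mod_cast hN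
  set g : ℕ → ℝ := fun n => ∑ k ∈ Finset.range N, indSeq A (n + 1 + k) with hg
  have hgbdd : IsBddSeq g := isBddSeq_winsum (isBddSeq_indSeq A) N
  have hgle : ∀ n, g n ≤ N * u := by
    intro n
    have h1 : ((A ∩ Set.Ioc n (n + N)).ncard : ℝ) / N ≤ u :=
      le_ciSup (term_bddAbove A N) n
    have h2 : g n = ((A ∩ Set.Ioc n (n + N)).ncard : ℝ) := (ncard_eq_sum A n N).symm
    rw [h2]
    calc ((A ∩ Set.Ioc n (n + N)).ncard : ℝ)
        = N * (((A ∩ Set.Ioc n (n + N)).ncard : ℝ) / N) := by field_simp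
      _ ≤ N * u := by nlinarith
  set h : ℕ → ℝ := ((N * u) • (fun _ => (1 : ℝ))) + ((-1 : ℝ) • g) with hh
  have hhbdd : IsBddSeq h := ((isBddSeq_const 1).smul _).add (hgbdd.smul _)
  have hhpos : ∀ n, 0 ≤ h n := by
    intro n
    simp only [hh, Pi.add_apply, Pi.smul_apply, smul_eq_mul, mul_one]
    linarith [hgle n]
  have hval : BL.toFun h = N * u - N * BL.toFun (indSeq A) := by
    rw [hh, BL.map_add' _ _ ((isBddSeq_const 1).smul _) (hgbdd.smul _),
      BL.map_smul' _ _ (isBddSeq_const 1), BL.map_smul' _ _ hgbdd, BL.map_one',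
      BL_winsum BL (isBddSeq_indSeq A) N]
    ring
  have := BL.pos' h hhbdd hhpos
  rw [hval] at this
  nlinarith

lemma dir2 (A : Set ℕ) (BL : BanachLimit) (hpos : 0 < BL.toFun (indSeq A)) :
    0 < upperBanachDensity A := by
  have hfreq : ∃ᶠ N in (atTop : Filter ℕ), BL.toFun (indSeq A) ≤
      ⨆ m : ℕ, ((A ∩ Set.Ioc m (m + N)).ncard : ℝ) / N :=
    ((eventually_atTop.mpr ⟨1, fun N hN => BL_le_u BL A N hN⟩).frequently)
  have hbdd : IsBoundedUnder (· ≤ ·) (atTop : Filter ℕ)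
      (fun N => ⨆ m : ℕ, ((A ∩ Set.Ioc m (m + N)).ncard : ℝ) / N) :=
    Filter.isBoundedUnder_of ⟨1, fun N => u_le_one A N⟩
  exact hpos.trans_le (Filter.le_limsup_of_frequently_le hfreq hbdd)

lemma dir1 (A : Set ℕ) (hd : 0 < upperBanachDensity A) :
    ∃ BL : BanachLimit, 0 < BL.toFun (indSeq A) := by
  set d := upperBanachDensity A with hdd
  -- frequently u N > d/2
  have hcobdd : IsCoboundedUnder (· ≤ ·) (atTop : Filter ℕ)
      (fun N => ⨆ m : ℕ, ((A ∩ Set.Ioc m (m + N)).ncard : ℝ) / N) :=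
    IsBoundedUnder.isCoboundedUnder_le (isBoundedUnder_of ⟨0, fun N => u_nonneg A N⟩)
  have hfreq : ∃ᶠ N in (atTop : Filter ℕ),
      d / 2 < ⨆ m : ℕ, ((A ∩ Set.Ioc m (m + N)).ncard : ℝ) / N :=
    frequently_lt_of_lt_limsup hcobdd (half_lt_self hd)
  have hsel : ∀ j : ℕ, ∃ N, 1 ≤ N ∧ j ≤ N ∧
      d / 2 < ⨆ m : ℕ, ((A ∩ Set.Ioc m (m + N)).ncard : ℝ) / N := by
    intro j
    obtain ⟨N, hN, hN2⟩ := (frequently_atTop.mp hfreq) (max j 1)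
    exact ⟨N, le_trans (le_max_right _ _) hN, le_trans (le_max_left _ _) hN, hN2⟩
  classical
  choose Nj hNj1 hNj2 hNj3 using hsel
  have hm : ∀ j, ∃ m, d / 2 < ((A ∩ Set.Ioc m (m + Nj j)).ncard : ℝ) / (Nj j) :=
    fun j => exists_lt_of_lt_ciSup (hNj3 j)
  choose mj hmj using hm
  obtain ⟨U, hU⟩ := Filter.exists_ultrafilter_le (atTop : Filter ℕ)
  have hNj_tendsto : Tendsto (fun j => (Nj j : ℝ)) atTop atTop :=
    tendsto_natCast_atTop_atTop.comp (tendsto_atTop_mono hNj2 tendsto_id)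
  have hNjpos : ∀ j, (0 : ℝ) < Nj j := fun j => by exact_mod_cast hNj1 j
  -- existence of ultrafilter limits
  have hlim : ∀ f : ℕ → ℝ, IsBddSeq f →
      ∃ L, Tendsto (fun j => avgS f (mj j) (Nj j)) (↑U) (𝓝 L) := by
    rintro f ⟨C, hC⟩
    have hmem : ∀ j, avgS f (mj j) (Nj j) ∈ Set.Icc (-C) C :=
      fun j => Set.mem_Icc.mpr (abs_le.mp (abs_avgS_le hC _ _))
    obtain ⟨L, -, hL⟩ := (isCompact_Icc (a := -C) (b := C)).ultrafilter_le_nhds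
      (U.map fun j => avgS f (mj j) (Nj j))
      (by
        rw [Ultrafilter.coe_map]
        exact Filter.le_principal_iff.mpr (Filter.mem_map.mpr (Filter.univ_mem' hmem)))
    refine ⟨L, ?_⟩
    rw [Filter.Tendsto, ← Ultrafilter.coe_map]
    exact_mod_cast hL
  set T : (ℕ → ℝ) → ℝ := fun f => if h : IsBddSeq f then (hlim f h).choose else 0 with hT
  have hTt : ∀ (f : ℕ → ℝ) (h : IsBddSeq f),
      Tendsto (fun j => avgS f (mj j) (Nj j)) (↑U) (𝓝 (T f)) := by
    intro f h
    simp only [hT, dif_pos h]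
    exact (hlim f h).choose_spec
  refine ⟨⟨T, ?_, ?_, ?_, ?_, ?_⟩, ?_⟩
  · -- add
    intro f g hf hg
    refine tendsto_nhds_unique (hTt (f + g) (hf.add hg)) ?_
    have h1 := (hTt f hf).add (hTt g hg)
    have h2 : (fun j => avgS (f + g) (mj j) (Nj j)) =
        fun j => avgS f (mj j) (Nj j) + avgS g (mj j) (Nj j) :=
      funext fun j => avgS_add f g _ _
    rw [h2]
    exact h1
  · -- smul
    intro c f hf
    refine tendsto_nhds_unique (hTt (c • f) (IsBddSeq.smul c hf)) ?_
    have h1 := (hTt f hf).const_mul c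
    have h2 : (fun j => avgS (c • f) (mj j) (Nj j)) =
        fun j => c * avgS f (mj j) (Nj j) :=
      funext fun j => avgS_smul c f _ _
    rw [h2]
    exact h1
  · -- pos
    intro f hf hpos
    exact ge_of_tendsto' (hTt f hf) fun j => avgS_nonneg hpos _ _
  · -- shift invariance
    intro f hf
    obtain ⟨C, hC⟩ := hf
    have hC0 : 0 ≤ C := (abs_nonneg _).trans (hC 0)
    have hdiff : Tendsto (fun j => avgS (fun n => f (n + 1)) (mj j) (Nj j)
        - avgS f (mj j) (Nj j)) (↑U) (𝓝 0) := by
      apply squeeze_zero_norm (a := fun j => 2 * C / (Nj j))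
      · intro j
        rw [Real.norm_eq_abs, avgS_shift_sub, abs_div,
          abs_of_nonneg (le_of_lt (hNjpos j))]
        refine (div_le_div_iff_of_pos_right (hNjpos j)).mpr ?_
        calc |f (mj j + 1 + Nj j) - f (mj j + 1)|
            ≤ |f (mj j + 1 + Nj j)| + |f (mj j + 1)| := abs_sub _ _
          _ ≤ C + C := add_le_add (hC _) (hC _)
          _ = 2 * C := by ring
      · exact (Tendsto.div_atTop tendsto_const_nhds hNj_tendsto).mono_left hU
    have h1 := (hTt (fun n => f (n + 1)) (IsBddSeq.comp _ ⟨C, hC⟩)).sub (hTt f ⟨C, hC⟩)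
    have h2 := tendsto_nhds_unique h1 hdiff
    linarith [h2]
  · -- map_one
    have h1 : (fun j => avgS (fun _ => (1 : ℝ)) (mj j) (Nj j)) = fun _ => (1 : ℝ) := by
      funext j
      unfold avgS
      rw [Finset.sum_const, Finset.card_range, nsmul_eq_mul, mul_one,
        div_self (ne_of_gt (hNjpos j))]
    refine tendsto_nhds_unique (hTt (fun _ => 1) ⟨1, fun n => by simp⟩) ?_
    rw [h1]
    exact tendsto_const_nhds
  · -- positivity on indSeq
    have hge : d / 2 ≤ T (indSeq A) := by
      refine ge_of_tendsto' (hTt (indSeq A) (isBddSeq_indSeq A)) fun j => ?_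
      rw [avgS_ind]
      exact le_of_lt (hmj j)
    linarith

/-- The family of sets with positive upper Banach density coincides with the family
of sets `A` for which some Banach limit takes a positive value on `1_A`. -/
theorem banachDensity_family_eq_banachLimit_family :
    {A : Set ℕ | 0 < upperBanachDensity A} =
      {A : Set ℕ | ∃ m : BanachLimit, 0 < m.toFun (indSeq A)} := by
  ext A
  simp only [Set.mem_setOf_eq]
  constructor
  · exact dir1 A
  · rintro ⟨BL, h⟩
    exact dir2 A BL h
end

section
/- For every set A ⊆ ℕ with positive upper Banach density there exists a Banach limit m on ℓ^∞ such that m(1_A) equals the upper Banach density of A. -/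
open Filter Finset

/-- window average -/
noncomputable def bAvg (f : ℕ → ℝ) (N m : ℕ) : ℝ := (∑ i ∈ Finset.Ioc m (m + N), f i) / N

noncomputable def bSup (f : ℕ → ℝ) (N : ℕ) : ℝ := ⨆ m, bAvg f N m

noncomputable def bP (f : ℕ → ℝ) : ℝ := Filter.limsup (bSup f) Filter.atTop

lemma abs_bAvg_le {f : ℕ → ℝ} {C : ℝ} (hC : ∀ n, |f n| ≤ C) (N m : ℕ) :
    |bAvg f N m| ≤ C := by
  have hC0 : 0 ≤ C := le_trans (abs_nonneg _) (hC 0)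
  rcases Nat.eq_zero_or_pos N with h | h
  · simp [bAvg, h, hC0]
  · have hcard : (Finset.Ioc m (m + N)).card = N := by
      rw [Nat.card_Ioc]; omega
    have hs : |∑ i ∈ Finset.Ioc m (m + N), f i| ≤ (N : ℝ) * C := by
      calc |∑ i ∈ Finset.Ioc m (m + N), f i| ≤ ∑ i ∈ Finset.Ioc m (m + N), |f i| :=
            Finset.abs_sum_le_sum_abs _ _
        _ ≤ ∑ _i ∈ Finset.Ioc m (m + N), C := Finset.sum_le_sum fun i _ => hC i
        _ = (N : ℝ) * C := by rw [Finset.sum_const, hcard, nsmul_eq_mul]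
    have hN : (0 : ℝ) < N := by exact_mod_cast h
    rw [bAvg, abs_div, abs_of_pos hN, div_le_iff₀ hN]
    linarith

lemma bddAbove_bAvg {f : ℕ → ℝ} {C : ℝ} (hC : ∀ n, |f n| ≤ C) (N : ℕ) :
    BddAbove (Set.range (bAvg f N)) := by
  refine ⟨C, ?_⟩
  rintro _ ⟨m, rfl⟩
  exact le_of_abs_le (abs_bAvg_le hC N m)

lemma bSup_le {f : ℕ → ℝ} {C : ℝ} (hC : ∀ n, |f n| ≤ C) (N : ℕ) : bSup f N ≤ C :=
  ciSup_le fun m => le_of_abs_le (abs_bAvg_le hC N m)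

lemma neg_le_bSup {f : ℕ → ℝ} {C : ℝ} (hC : ∀ n, |f n| ≤ C) (N : ℕ) : -C ≤ bSup f N :=
  le_trans (neg_le_of_abs_le (abs_bAvg_le hC N 0)) (le_ciSup (bddAbove_bAvg hC N) 0)

lemma isBddU_le {f : ℕ → ℝ} (h : IsBddSeq f) :
    IsBoundedUnder (· ≤ ·) atTop (bSup f) := by
  obtain ⟨C, hC⟩ := h
  exact isBoundedUnder_of ⟨C, fun N => bSup_le hC N⟩

lemma isBddU_ge {f : ℕ → ℝ} (h : IsBddSeq f) :
    IsBoundedUnder (· ≥ ·) atTop (bSup f) := by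
  obtain ⟨C, hC⟩ := h
  exact isBoundedUnder_of ⟨-C, fun N => neg_le_bSup hC N⟩

lemma isCobddU {f : ℕ → ℝ} (h : IsBddSeq f) :
    IsCoboundedUnder (· ≤ ·) atTop (bSup f) :=
  (isBddU_ge h).isCoboundedUnder_le

lemma bAvg_add (f g : ℕ → ℝ) (N m : ℕ) :
    bAvg (f + g) N m = bAvg f N m + bAvg g N m := by
  simp [bAvg, Finset.sum_add_distrib, add_div]

lemma bSup_add_le {f g : ℕ → ℝ} (hf : IsBddSeq f) (hg : IsBddSeq g) (N : ℕ) :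
    bSup (f + g) N ≤ bSup f N + bSup g N := by
  obtain ⟨C, hC⟩ := hf; obtain ⟨D, hD⟩ := hg
  refine ciSup_le fun m => ?_
  rw [bAvg_add]
  exact add_le_add (le_ciSup (bddAbove_bAvg hC N) m) (le_ciSup (bddAbove_bAvg hD N) m)

lemma bP_add_le {f g : ℕ → ℝ} (hf : IsBddSeq f) (hg : IsBddSeq g) :
    bP (f + g) ≤ bP f + bP g := by
  have h1 : bP (f + g) ≤ limsup (fun N => bSup f N + bSup g N) atTop := by
    refine limsup_le_limsup (Eventually.of_forall (bSup_add_le hf hg)) ?_ ?_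
    · exact isCobddU ⟨_, fun n => (abs_add_le (f n) (g n)).trans
        (add_le_add (hf.choose_spec n) (hg.choose_spec n))⟩
    · exact isBoundedUnder_of ⟨hf.choose + hg.choose,
        fun N => add_le_add (bSup_le hf.choose_spec N) (bSup_le hg.choose_spec N)⟩
  refine h1.trans ?_
  exact limsup_add_le (isBddU_ge hf) (isBddU_le hf) (isCobddU hg) (isBddU_le hg)

lemma bAvg_smul (c : ℝ) (f : ℕ → ℝ) (N m : ℕ) :
    bAvg (c • f) N m = c * bAvg f N m := by
  simp [bAvg, ← Finset.mul_sum, mul_div_assoc]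

lemma bSup_smul {c : ℝ} (hc : 0 ≤ c) (f : ℕ → ℝ) (N : ℕ) :
    bSup (c • f) N = c * bSup f N := by
  rw [bSup, bSup, Real.mul_iSup_of_nonneg hc]
  exact iSup_congr fun m => bAvg_smul c f N m

lemma bP_smul {c : ℝ} (hc : 0 < c) {f : ℕ → ℝ} (hf : IsBddSeq f) :
    bP (c • f) = c * bP f := by
  have key := OrderIso.limsup_apply (f := atTop) (u := bSup f) (OrderIso.mulLeft₀ c hc)
      (isBddU_le hf) (isCobddU hf)
      (isBoundedUnder_of ⟨c * hf.choose, fun N =>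
        mul_le_mul_of_nonneg_left (bSup_le hf.choose_spec N) hc.le⟩)
      ((isBoundedUnder_of ⟨c * (-hf.choose), fun N =>
        mul_le_mul_of_nonneg_left (neg_le_bSup hf.choose_spec N) hc.le⟩ :
          IsBoundedUnder (· ≥ ·) atTop _).isCoboundedUnder_le)
  simp only [OrderIso.mulLeft₀_apply] at key
  rw [bP, bP, key]
  exact limsup_congr (Eventually.of_forall fun N => bSup_smul hc.le f N)

lemma bAvg_zero (N m : ℕ) : bAvg (0 : ℕ → ℝ) N m = 0 := by simp [bAvg]

lemma bP_zero : bP (0 : ℕ → ℝ) = 0 := by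
  have : bSup (0 : ℕ → ℝ) = fun _ => (0 : ℝ) := by
    funext N; rw [bSup]; simp [bAvg_zero, ciSup_const]
  rw [bP, this, limsup_const]

/-- positivity: nonpositive sequences have nonpositive `bP`. -/
lemma bP_nonpos {f : ℕ → ℝ} (hb : IsBddSeq f) (hf : ∀ n, f n ≤ 0) : bP f ≤ 0 := by
  have h : ∀ N, bSup f N ≤ 0 := by
    intro N
    refine ciSup_le fun m => ?_
    rw [bAvg]
    apply div_nonpos_of_nonpos_of_nonneg
    · exact Finset.sum_nonpos fun i _ => hf i
    · exact Nat.cast_nonneg N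
  exact limsup_le_of_le (isCobddU hb) (Eventually.of_forall h)

lemma telescope_sum (f : ℕ → ℝ) (m N : ℕ) :
    ∑ i ∈ Finset.Ioc m (m + N), (f (i + 1) - f i) = f (m + N + 1) - f (m + 1) := by
  induction N with
  | zero => simp
  | succ n ih =>
    rw [show m + (n + 1) = (m + n) + 1 from rfl,
      Finset.sum_Ioc_succ_top (Nat.le_add_right m n), ih]
    ring

/-- `bP` of the discrete derivative of a bounded sequence is ≤ 0. -/
lemma bP_shift_sub {f : ℕ → ℝ} (hf : IsBddSeq f) :
    bP ((fun n => f (n + 1)) - f) ≤ 0 := by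
  obtain ⟨C, hC⟩ := hf
  have hC0 : 0 ≤ C := le_trans (abs_nonneg _) (hC 0)
  have key : ∀ N, bSup ((fun n => f (n + 1)) - f) N ≤ 2 * C / N := by
    intro N
    refine ciSup_le fun m => ?_
    have : bAvg ((fun n => f (n + 1)) - f) N m = (f (m + N + 1) - f (m + 1)) / N := by
      rw [bAvg]
      congr 1
      simpa using telescope_sum f m N
    rw [this]
    rcases Nat.eq_zero_or_pos N with h | h
    · simp [h]
    · have hN : (0 : ℝ) < N := by exact_mod_cast h
      have h1 := abs_le.1 (hC (m + N + 1))
      have h2 := abs_le.1 (hC (m + 1))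
      have : f (m + N + 1) - f (m + 1) ≤ 2 * C := by linarith
      exact by gcongr
  have hb : Tendsto (fun N : ℕ => 2 * C / N) atTop (nhds 0) :=
    tendsto_const_div_atTop_nhds_zero_nat (2 * C)
  calc bP ((fun n => f (n + 1)) - f)
      ≤ limsup (fun N : ℕ => 2 * C / N) atTop := by
        refine limsup_le_limsup (Eventually.of_forall key) ?_ ?_
        · refine isCobddU ⟨2 * C, fun n => ?_⟩
          have h1 := hC (n + 1); have h2 := hC n
          have : |f (n + 1) - f n| ≤ |f (n + 1)| + |f n| := abs_sub _ _
          simp only [Pi.sub_apply]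
          refine this.trans (by linarith)
        · exact hb.isBoundedUnder_le
    _ = 0 := hb.limsup_eq

lemma indSeq_sum (A : Set ℕ) (m N : ℕ) :
    ∑ i ∈ Finset.Ioc m (m + N), indSeq A i = ((A ∩ Set.Ioc m (m + N)).ncard : ℝ) := by
  classical
  have hset : A ∩ Set.Ioc m (m + N) = ((Finset.Ioc m (m + N)).filter (· ∈ A) : Finset ℕ) := by
    ext x
    simp [Set.mem_Ioc, and_comm]
  rw [hset, Set.ncard_coe_finset]
  simp [indSeq, Set.indicator_apply, Finset.sum_boole]

lemma bSup_indSeq (A : Set ℕ) (N : ℕ) :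
    bSup (indSeq A) N = ⨆ m : ℕ, ((A ∩ Set.Ioc m (m + N)).ncard : ℝ) / N := by
  refine iSup_congr fun m => ?_
  rw [bAvg, indSeq_sum]

lemma bAvg_one {N : ℕ} (hN : 0 < N) (m : ℕ) : bAvg (fun _ => (1 : ℝ)) N m = 1 := by
  rw [bAvg, Finset.sum_const, Nat.card_Ioc]
  have : m + N - m = N := by omega
  rw [this, nsmul_eq_mul, mul_one, div_self]
  exact_mod_cast hN.ne'

lemma bP_one : bP (fun _ => (1 : ℝ)) = 1 := by
  have h : ∀ᶠ N in atTop, bSup (fun _ => (1 : ℝ)) N = (fun _ => (1 : ℝ)) N := by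
    filter_upwards [eventually_gt_atTop 0] with N hN
    rw [bSup]
    simp only [bAvg_one hN]
    exact ciSup_const
  rw [bP, limsup_congr h, limsup_const]

lemma bAvg_neg_one {N : ℕ} (hN : 0 < N) (m : ℕ) : bAvg (fun _ => (-1 : ℝ)) N m = -1 := by
  have : (fun _ : ℕ => (-1 : ℝ)) = fun i => -(fun _ : ℕ => (1:ℝ)) i := by funext; simp
  rw [bAvg, Finset.sum_neg_distrib, neg_div]
  have := bAvg_one hN m
  rw [bAvg] at this
  rw [this]

lemma bP_neg_one : bP (fun _ => (-1 : ℝ)) = -1 := by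
  have h : ∀ᶠ N in atTop, bSup (fun _ => (-1 : ℝ)) N = (fun _ => (-1 : ℝ)) N := by
    filter_upwards [eventually_gt_atTop 0] with N hN
    rw [bSup]
    simp only [bAvg_neg_one hN]
    exact ciSup_const
  rw [bP, limsup_congr h, limsup_const]

lemma bP_neg_le {f : ℕ → ℝ} (hf : IsBddSeq f) : -bP (-f) ≤ bP f := by
  have h0 : (0 : ℝ) = bP 0 := bP_zero.symm
  have : bP (f + (-f)) ≤ bP f + bP (-f) := by
    refine bP_add_le hf ?_
    obtain ⟨C, hC⟩ := hf
    exact ⟨C, fun n => by simpa using hC n⟩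
  rw [add_neg_cancel] at this
  linarith [bP_zero ▸ this]

/-- The submodule of bounded sequences. -/
def bddM : Submodule ℝ (ℕ → ℝ) where
  carrier := {f | IsBddSeq f}
  add_mem' := by
    rintro f g ⟨C, hC⟩ ⟨D, hD⟩
    exact ⟨C + D, fun n => (abs_add_le _ _).trans (add_le_add (hC n) (hD n))⟩
  zero_mem' := ⟨0, by simp⟩
  smul_mem' := by
    rintro c f ⟨C, hC⟩
    exact ⟨|c| * C, fun n => by
      rw [Pi.smul_apply, smul_eq_mul, abs_mul]
      exact mul_le_mul_of_nonneg_left (hC n) (abs_nonneg c)⟩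

/-- For every set `A ⊆ ℕ` with positive upper Banach density there exists a Banach limit
`m` such that `m(1_A)` equals the upper Banach density of `A`. -/
theorem exists_banachLimit_eq_upperBanachDensity (A : Set ℕ)
    (hA : 0 < upperBanachDensity A) :
    ∃ m : BanachLimit, m.toFun (indSeq A) = upperBanachDensity A := by
  classical
  set d := upperBanachDensity A with hd
  have hbda : IsBddSeq (indSeq A) := by
    refine ⟨1, fun n => ?_⟩
    rw [indSeq, Set.indicator_apply]
    split_ifs <;> simp
  have hP_eq : bP (indSeq A) = d := by
    rw [bP, hd, upperBanachDensity]
    exact limsup_congr (Eventually.of_forall (bSup_indSeq A))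
  set a : bddM := ⟨indSeq A, hbda⟩ with ha_def
  have ha0 : a ≠ 0 := by
    intro h
    have h2 : indSeq A = 0 := congrArg Subtype.val h
    rw [h2, bP_zero] at hP_eq
    linarith
  set p : bddM → ℝ := fun x => bP x.val with hp_def
  have N_hom : ∀ c : ℝ, 0 < c → ∀ x : bddM, p (c • x) = c * p x := fun c hc x =>
    bP_smul hc x.2
  have N_add : ∀ x y : bddM, p (x + y) ≤ p x + p y := fun x y => bP_add_le x.2 y.2
  have hf : ∀ x : (LinearPMap.mkSpanSingleton (K := ℝ) (L := ℝ) (σ := RingHom.id ℝ) a d ha0).domain,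
      (LinearPMap.mkSpanSingleton (K := ℝ) (L := ℝ) (σ := RingHom.id ℝ) a d ha0) x ≤ p x := by
    rintro ⟨x, hx⟩
    obtain ⟨c, rfl⟩ := Submodule.mem_span_singleton.1 hx
    rw [LinearPMap.mkSpanSingleton'_apply, smul_eq_mul, RingHom.id_apply]
    rcases lt_trichotomy c 0 with hc | hc | hc
    · have hx : (c • a).val = (-c) • (-(indSeq A)) := by
        simp [ha_def]
      have hbdneg : IsBddSeq (-(indSeq A)) := by
        obtain ⟨C, hC⟩ := hbda
        exact ⟨C, fun n => by simpa using hC n⟩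
      have : p (c • a) = (-c) * bP (-(indSeq A)) := by
        rw [hp_def]; dsimp only; rw [hx]; exact bP_smul (by linarith) hbdneg
      rw [this]
      have h1 : -d ≤ bP (-(indSeq A)) := by
        have := bP_neg_le hbda
        rw [hP_eq] at this
        linarith
      nlinarith
    · subst hc
      rw [zero_mul]
      show (0 : ℝ) ≤ bP ((((0:ℝ) • a : bddM) : ℕ → ℝ))
      rw [zero_smul, Submodule.coe_zero, bP_zero]
    · rw [N_hom c hc a]
      have : p a = d := hP_eq
      rw [this]
  obtain ⟨g, hg_eq, hg_le⟩ := exists_extension_of_le_sublinear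
    (LinearPMap.mkSpanSingleton (K := ℝ) (L := ℝ) (σ := RingHom.id ℝ) a d ha0) p N_hom N_add hf
  have hga : g a = d := by
    have h1 := hg_eq ⟨a, Submodule.mem_span_singleton_self a⟩
    rw [LinearPMap.mkSpanSingleton_apply] at h1
    exact h1
  refine ⟨⟨fun f => if h : IsBddSeq f then g ⟨f, h⟩ else 0, ?_, ?_, ?_, ?_, ?_⟩, ?_⟩
  · -- map_add'
    intro f1 f2 h1 h2
    have h12 : IsBddSeq (f1 + f2) := bddM.add_mem h1 h2
    simp only [dif_pos h1, dif_pos h2, dif_pos h12]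
    have e : (⟨f1 + f2, h12⟩ : bddM) = ⟨f1, h1⟩ + ⟨f2, h2⟩ := rfl
    rw [e, map_add]
  · -- map_smul'
    intro c f hfb
    have h2 : IsBddSeq (c • f) := bddM.smul_mem c hfb
    simp only [dif_pos hfb, dif_pos h2]
    have e : (⟨c • f, h2⟩ : bddM) = c • (⟨f, hfb⟩ : bddM) := rfl
    rw [e, map_smul, smul_eq_mul]
  · -- pos'
    intro f hfb hpos
    simp only [dif_pos hfb]
    have hnegb : IsBddSeq (-f) := by
      obtain ⟨C, hC⟩ := hfb
      exact ⟨C, fun n => by simpa using hC n⟩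
    have h1 : g (-(⟨f, hfb⟩ : bddM)) ≤ bP (-f) := by
      have h := hg_le (-(⟨f, hfb⟩ : bddM))
      have e : ((-(⟨f, hfb⟩ : bddM) : bddM) : ℕ → ℝ) = -f := rfl
      rw [hp_def] at h
      simpa [e] using h
    have h2 : bP (-f) ≤ 0 := bP_nonpos hnegb fun n => by simpa using hpos n
    have h3 : g (-(⟨f, hfb⟩ : bddM)) = -g ⟨f, hfb⟩ := map_neg g _
    linarith
  · -- shift_invariant'
    intro f hfb
    have hS : IsBddSeq (fun n => f (n + 1)) := by
      obtain ⟨C, hC⟩ := hfb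
      exact ⟨C, fun n => hC (n + 1)⟩
    simp only [dif_pos hS, dif_pos hfb]
    have hnegb : IsBddSeq (-f) := by
      obtain ⟨C, hC⟩ := hfb
      exact ⟨C, fun n => by simpa using hC n⟩
    have hu : g ((⟨fun n => f (n + 1), hS⟩ : bddM) - ⟨f, hfb⟩) ≤ 0 := by
      refine (hg_le _).trans ?_
      have e : (((⟨fun n => f (n + 1), hS⟩ : bddM) - ⟨f, hfb⟩ : bddM) : ℕ → ℝ)
          = (fun n => f (n + 1)) - f := rfl
      rw [hp_def]
      simpa [e] using bP_shift_sub hfb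
    have hv : g (-((⟨fun n => f (n + 1), hS⟩ : bddM) - ⟨f, hfb⟩)) ≤ 0 := by
      refine (hg_le _).trans ?_
      have e : ((-((⟨fun n => f (n + 1), hS⟩ : bddM) - ⟨f, hfb⟩) : bddM) : ℕ → ℝ)
          = (fun n => (-f) (n + 1)) - (-f) := by
        funext n
        show -(f (n + 1) - f n) = -f (n + 1) - -f n
        ring
      have e2 : p (-((⟨fun n => f (n + 1), hS⟩ : bddM) - ⟨f, hfb⟩))
          = bP ((fun n => (-f) (n + 1)) - (-f)) := congrArg bP e
      rw [e2]
      exact bP_shift_sub hnegb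
    have h3 : g (-((⟨fun n => f (n + 1), hS⟩ : bddM) - ⟨f, hfb⟩))
        = -g ((⟨fun n => f (n + 1), hS⟩ : bddM) - ⟨f, hfb⟩) := map_neg g _
    have h4 : g ((⟨fun n => f (n + 1), hS⟩ : bddM) - ⟨f, hfb⟩)
        = g ⟨fun n => f (n + 1), hS⟩ - g ⟨f, hfb⟩ := map_sub g _ _
    have : g ((⟨fun n => f (n + 1), hS⟩ : bddM) - ⟨f, hfb⟩) = 0 := by linarith
    rw [h4] at this
    linarith
  · -- map_one'
    have h1b : IsBddSeq (fun _ => (1 : ℝ)) := ⟨1, by norm_num⟩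
    simp only [dif_pos h1b]
    have ha1 : g ⟨fun _ => (1 : ℝ), h1b⟩ ≤ 1 := by
      have h := hg_le ⟨fun _ => (1 : ℝ), h1b⟩
      rw [hp_def] at h
      simpa [bP_one] using h
    have hb1 : g (-(⟨fun _ => (1 : ℝ), h1b⟩ : bddM)) ≤ -1 := by
      have h := hg_le (-(⟨fun _ => (1 : ℝ), h1b⟩ : bddM))
      have e : ((-(⟨fun _ => (1 : ℝ), h1b⟩ : bddM) : bddM) : ℕ → ℝ)
          = fun _ => (-1 : ℝ) := rfl
      have e2 : p (-(⟨fun _ => (1 : ℝ), h1b⟩ : bddM)) = bP (fun _ => (-1 : ℝ)) :=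
        congrArg bP e
      rw [e2, bP_neg_one] at h
      exact h
    have h3 : g (-(⟨fun _ => (1 : ℝ), h1b⟩ : bddM)) = -g ⟨fun _ => (1 : ℝ), h1b⟩ := map_neg g _
    linarith
  · -- value at indSeq A
    show (if h : IsBddSeq (indSeq A) then g ⟨indSeq A, h⟩ else 0) = upperBanachDensity A
    simp only [dif_pos hbda]
    exact hga
end

section
/- Let T be a continuous linear operator on a Fréchet space X that is not normable (not locally bounded). Then every hypercyclic vector for T is recurrent but does not have a locally bounded orbit: HC(T) ⊆ Rec(T) \ ℓbo(T). -/
open Pointwise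

variable {𝕜 X : Type*} [NontriviallyNormedField 𝕜] [AddCommGroup X] [Module 𝕜 X]
  [UniformSpace X] [IsUniformAddGroup X] [ContinuousSMul 𝕜 X] [CompleteSpace X]
  [TopologicalSpace.MetrizableSpace X]

/-- The orbit `{Tⁿ x : n ≥ 1}` of a vector under a continuous linear operator. -/
def orbit (T : X →L[𝕜] X) (x : X) : Set X := Set.range fun n : ℕ => (T ^ (n + 1)) x

/-- `x` has a locally bounded orbit for `T` if some neighbourhood `U` of `x`
meets the orbit of `x` in a von Neumann bounded set. -/
def HasLocallyBoundedOrbit (T : X →L[𝕜] X) (x : X) : Prop :=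
  ∃ U ∈ nhds x, Bornology.IsVonNBounded 𝕜 (U ∩ orbit T x)

theorem isVonNBounded_closure' {s : Set X} (hs : Bornology.IsVonNBounded 𝕜 s) :
    Bornology.IsVonNBounded 𝕜 (closure s) := by
  intro V hV
  obtain ⟨W, hWn, hWc, hWV⟩ := exists_mem_nhds_isClosed_subset hV
  filter_upwards [hs hWn, Bornology.eventually_ne_cobounded (0 : 𝕜)] with c hc hc0
  calc closure s ⊆ closure (c • W) := closure_mono hc
    _ = c • W := (hWc.smul_of_ne_zero hc0).closure_eq
    _ ⊆ c • V := Set.smul_set_mono hWV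

/-- On a non-normable Fréchet space (no bounded neighbourhood of zero), every
hypercyclic vector is recurrent but has no locally bounded orbit:
`HC(T) ⊆ Rec(T) \\ ℓbo(T)`. -/
theorem hypercyclic_subset_rec_not_lbo
    (hnn : ∀ U ∈ nhds (0 : X), ¬ Bornology.IsVonNBounded 𝕜 U)
    (T : X →L[𝕜] X) (x : X) (hx : Dense (orbit T x)) :
    x ∈ closure (orbit T x) ∧ ¬ HasLocallyBoundedOrbit T x := by
  refine ⟨hx x, ?_⟩
  rintro ⟨U, hU, hbdd⟩
  obtain ⟨V, hVU, hVo, hxV⟩ := mem_nhds_iff.mp hU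
  have hVsub : V ⊆ closure (U ∩ orbit T x) :=
    (hx.open_subset_closure_inter hVo).trans
      (closure_mono (Set.inter_subset_inter_left _ hVU))
  have hVbdd : Bornology.IsVonNBounded 𝕜 V :=
    ((isVonNBounded_closure' hbdd).subset hVsub)
  have hW : (-x) +ᵥ V ∈ nhds (0 : X) := by
    refine (hVo.vadd (-x)).mem_nhds ?_
    exact ⟨x, hxV, by simp⟩
  exact hnn _ hW (hVbdd.vadd _)
end

section
/- Let T be a continuous linear operator on a Fréchet space X and let x be a uniformly recurrent vector for T. Then x has a locally bounded orbit for T if and only if the orbit O_T(x) is bounded in X. -/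
variable {𝕜 X : Type*} [NontriviallyNormedField 𝕜] [AddCommGroup X] [Module 𝕜 X]
  [UniformSpace X] [IsUniformAddGroup X] [ContinuousSMul 𝕜 X] [CompleteSpace X]
  [TopologicalSpace.MetrizableSpace X]

/-- A set of positive integers is syndetic (has bounded gaps). -/
def Syndetic (S : Set ℕ) : Prop :=
  ∃ N : ℕ, 0 < N ∧ ∀ m : ℕ, ∃ n ∈ S, m < n ∧ n ≤ m + N

/-- The return set `N_T(x,U) = {n ≥ 1 : Tⁿ x ∈ U}`. -/
def returnSet (T : X →L[𝕜] X) (x : X) (U : Set X) : Set ℕ :=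
  {n : ℕ | 0 < n ∧ (T ^ n) x ∈ U}

/-- `x` is uniformly recurrent for `T` if all its return sets to neighbourhoods
of `x` are syndetic. -/
def UniformlyRecurrent (T : X →L[𝕜] X) (x : X) : Prop :=
  ∀ U ∈ nhds x, Syndetic (returnSet T x U)

/-- A uniformly recurrent vector has a locally bounded orbit if and only if its
orbit is bounded. -/
theorem uniformlyRecurrent_lbo_iff_bounded_orbit (T : X →L[𝕜] X) (x : X)
    (hur : UniformlyRecurrent T x) :
    HasLocallyBoundedOrbit T x ↔ Bornology.IsVonNBounded 𝕜 (orbit T x) := by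
  constructor
  · rintro ⟨U, hU, hB⟩
    obtain ⟨N, hN, hsyn⟩ := hur U hU
    set B := U ∩ orbit T x with hBdef
    have hsub : orbit T x ⊆
        (⋃ j : Fin N, (T ^ (j : ℕ)) '' B) ∪ (⋃ k : Fin N, {(T ^ ((k : ℕ) + 1)) x}) := by
      rintro y ⟨m, rfl⟩
      simp only [Set.mem_union, Set.mem_iUnion, Set.mem_singleton_iff]
      by_cases hm : m + 1 < N
      · exact Or.inr ⟨⟨m, by omega⟩, rfl⟩
      · push_neg at hm
        set k := m + 1 with hk
        obtain ⟨n, ⟨hn0, hnU⟩, hlt, hle⟩ := hsyn (k - N)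
        have hnk : n ≤ k := by omega
        have hjlt : k - n < N := by omega
        have hmem : (T ^ n) x ∈ orbit T x := by
          refine ⟨n - 1, ?_⟩
          have h1 : n - 1 + 1 = n := by omega
          show (T ^ (n - 1 + 1)) x = (T ^ n) x
          rw [h1]
        refine Or.inl ⟨⟨k - n, hjlt⟩, (T ^ n) x, ⟨hnU, hmem⟩, ?_⟩
        have h2 : k - n + n = k := by omega
        rw [← ContinuousLinearMap.comp_apply, ← ContinuousLinearMap.mul_def, ← pow_add, h2]
    have hbd1 : Bornology.IsVonNBounded 𝕜 (⋃ j : Fin N, (T ^ (j : ℕ)) '' B) := by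
      rw [Bornology.isVonNBounded_iUnion]
      intro j
      exact hB.image (T ^ (j : ℕ))
    have hbd2 : Bornology.IsVonNBounded 𝕜 (⋃ k : Fin N, ({(T ^ ((k : ℕ) + 1)) x} : Set X)) := by
      rw [Bornology.isVonNBounded_iUnion]
      intro k
      exact Bornology.isVonNBounded_singleton _
    exact (hbd1.union hbd2).subset hsub
  · intro h
    exact ⟨Set.univ, Filter.univ_mem, by simpa using h⟩
end

section
/- Let T be a continuous linear operator on a Fréchet space X. If the set URec(T) ∩ ℓbo(T) of uniformly recurrent vectors with locally bounded orbit is non-meager in X, then T is power-bounded, i.e., the family {Tⁿ : n ≥ 1} is equicontinuous. -/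
open Pointwise


variable {𝕜 X : Type*} [NontriviallyNormedField 𝕜] [AddCommGroup X] [Module 𝕜 X]
  [UniformSpace X] [IsUniformAddGroup X] [ContinuousSMul 𝕜 X] [CompleteSpace X]
  [TopologicalSpace.MetrizableSpace X]

lemma orbit_isVonNBounded_aux (T : X →L[𝕜] X) (x : X)
    (hur : UniformlyRecurrent T x) (hlb : HasLocallyBoundedOrbit T x) :
    Bornology.IsVonNBounded 𝕜 (orbit T x) := by
  obtain ⟨U, hU, hB⟩ := hlb
  obtain ⟨N, hN, hsyn⟩ := hur U hU
  have hsub : orbit T x ⊆ (⋃ j ∈ Set.Iio N, (T ^ j) '' (U ∩ orbit T x)) ∪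
      (⋃ j ∈ Set.Iio N, {(T ^ (j + 1)) x}) := by
    rintro _ ⟨k, rfl⟩
    by_cases hk : k + 1 ≤ N
    · right
      simp only [Set.mem_iUnion]
      exact ⟨k, Set.mem_Iio.mpr (by omega), rfl⟩
    · obtain ⟨r, ⟨hr0, hrU⟩, hlt, hle⟩ := hsyn (k + 1 - N)
      left
      simp only [Set.mem_iUnion]
      refine ⟨k + 1 - r, Set.mem_Iio.mpr (by omega), ?_⟩
      refine ⟨(T ^ r) x, ⟨hrU, ⟨r - 1, by show (T ^ (r - 1 + 1)) x = (T ^ r) x; rw [show r - 1 + 1 = r by omega]⟩⟩, ?_⟩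
      rw [← ContinuousLinearMap.mul_apply, ← pow_add,
        show k + 1 - r + r = k + 1 by omega]
  refine Bornology.IsVonNBounded.subset hsub (Bornology.IsVonNBounded.union ?_ ?_)
  · exact (Bornology.isVonNBounded_biUnion (Set.finite_Iio N)).mpr
      fun j _ => hB.image (T ^ j)
  · exact (Bornology.isVonNBounded_biUnion (Set.finite_Iio N)).mpr
      fun j _ => Bornology.isVonNBounded_singleton _


/-- If the set of uniformly recurrent vectors with locally bounded orbit is
non-meager, then `T` is power-bounded, i.e. the powers of `T` are equicontinuous. -/
theorem powerBounded_of_nonmeager_urec_lbo (T : X →L[𝕜] X)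
    (h : ¬ IsMeagre {x : X | UniformlyRecurrent T x ∧ HasLocallyBoundedOrbit T x}) :
    Equicontinuous (fun n : ℕ => ⇑(T ^ (n + 1))) := by
  haveI : (uniformity X).IsCountablyGenerated := by
    rw [uniformity_eq_comap_nhds_zero]
    infer_instance
  have hA : ¬ IsMeagre {x : X | Bornology.IsVonNBounded 𝕜 (orbit T x)} := fun hm =>
    h (hm.mono fun x hx => orbit_isVonNBounded_aux T x hx.1 hx.2)
  have key : EquicontinuousAt (fun n : ℕ => ⇑(T ^ (n + 1))) 0 := by
    intro Uent hUent
    rw [uniformity_eq_comap_nhds_zero, Filter.mem_comap] at hUent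
    obtain ⟨V, hV, hVU⟩ := hUent
    obtain ⟨V₁, hV₁, hV₁V⟩ := exists_nhds_zero_half hV
    obtain ⟨C, ⟨hCn, hCc⟩, hCV₁⟩ := (closed_nhds_basis (0 : X)).mem_iff.mp hV₁
    set W : Set X := balancedCore 𝕜 C with hWdef
    have hWn : W ∈ nhds (0 : X) := balancedCore_mem_nhds_zero hCn
    have hWc : IsClosed W := hCc.balancedCore
    have hWb : Balanced 𝕜 W := balancedCore_balanced C
    have hWV₁ : W ⊆ V₁ := (balancedCore_subset C).trans hCV₁
    set E : Set X := ⋂ n : ℕ, (T ^ (n + 1)) ⁻¹' W with hEdef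
    have hEc : IsClosed E := isClosed_iInter fun n => hWc.preimage (T ^ (n + 1)).continuous
    obtain ⟨k, hk⟩ := NormedField.exists_one_lt_norm 𝕜
    have hk0 : k ≠ 0 := by
      intro h0; rw [h0, norm_zero] at hk; linarith
    have hAsub : {x : X | Bornology.IsVonNBounded 𝕜 (orbit T x)} ⊆
        ⋃ m : ℕ, ((k ^ m) • E : Set X) := by
      intro x hx
      obtain ⟨r, hr⟩ := absorbs_iff_norm.mp (hx hWn)
      obtain ⟨m, hm⟩ := pow_unbounded_of_one_lt r hk
      refine Set.mem_iUnion.mpr ⟨m, ?_⟩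
      rw [Set.mem_smul_set_iff_inv_smul_mem₀ (pow_ne_zero m hk0)]
      refine Set.mem_iInter.mpr fun n => ?_
      have horb : (T ^ (n + 1)) x ∈ (k ^ m) • W :=
        hr (k ^ m) (by rw [norm_pow]; exact hm.le) ⟨n, rfl⟩
      rw [Set.mem_preimage, map_smul]
      rwa [← Set.mem_smul_set_iff_inv_smul_mem₀ (pow_ne_zero m hk0)]
    have hex : ∃ m : ℕ, ¬ IsMeagre ((k ^ m) • E : Set X) := by
      by_contra hall
      push_neg at hall
      exact hA ((isMeagre_iUnion hall).mono hAsub)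
    obtain ⟨m, hm⟩ := hex
    have hEint : (interior E).Nonempty := by
      by_contra hemp
      rw [Set.not_nonempty_iff_eq_empty] at hemp
      apply hm
      rw [isMeagre_iff_countable_union_isNowhereDense]
      refine ⟨{(k ^ m) • E}, ?_, Set.countable_singleton _, by simp⟩
      rintro t ht
      rw [Set.mem_singleton_iff] at ht
      subst ht
      have hclosed : IsClosed ((k ^ m) • E) := by
        rw [← Set.image_smul]
        exact (Homeomorph.smulOfNeZero (k ^ m) (pow_ne_zero m hk0)).isClosedMap _ hEc
      show interior (closure ((k ^ m) • E)) = ∅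
      rw [hclosed.closure_eq, interior_smul₀ (pow_ne_zero m hk0), hemp, Set.smul_set_empty]
    obtain ⟨x₀, hx₀⟩ := hEint
    have hx₀E : x₀ ∈ E := interior_subset hx₀
    have hD : (fun y : X => x₀ + y) ⁻¹' interior E ∈ nhds (0 : X) := by
      refine (isOpen_interior.preimage (continuous_const.add continuous_id)).mem_nhds ?_
      simpa using hx₀
    filter_upwards [hD] with y hy n
    apply hVU
    show (T ^ (n + 1)) y - (T ^ (n + 1)) 0 ∈ V
    rw [map_zero, sub_zero]
    have h1 : (T ^ (n + 1)) (x₀ + y) ∈ W :=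
      Set.mem_iInter.mp (interior_subset hy) n
    have h2 : (T ^ (n + 1)) x₀ ∈ W := Set.mem_iInter.mp hx₀E n
    have h3 : (T ^ (n + 1)) y = (T ^ (n + 1)) (x₀ + y) + -((T ^ (n + 1)) x₀) := by
      rw [map_add]; abel
    rw [h3]
    exact hV₁V _ (hWV₁ h1) _ (hWV₁ (hWb.neg_mem_iff.mpr h2))
  exact equicontinuous_of_equicontinuousAt_zero (fun n : ℕ => T ^ (n + 1)) key
end

section
/- Let X be a topological space admitting a second, coarser Hausdorff topology τ such that every point of X has a τ_X-neighbourhood basis consisting of τ-closed sets. If X (with its original topology τ_X) is hereditarily Lindelöf, then the Borel σ-algebras of (X, τ) and (X, τ_X) coincide. -/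
/-- If a hereditarily Lindelöf topological space `(X, τX)` admits a coarser Hausdorff
topology `τ` such that every point has a `τX`-neighbourhood basis of `τ`-closed sets,
then the Borel σ-algebras of the two topologies coincide. -/
theorem borel_eq_of_coarser_closed_nhds_basis {X : Type*}
    (τX τ : TopologicalSpace X)
    (hcoarser : τX ≤ τ)
    (hT2 : @T2Space X τ)
    (hbasis : ∀ x : X, ∀ s ∈ @nhds X τX x,
      ∃ c ∈ @nhds X τX x, @IsClosed X τ c ∧ c ⊆ s)
    (hLind : @HereditarilyLindelofSpace X τX) :
    @borel X τ = @borel X τX := by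
  letI := τX
  refine le_antisymm (borel_anti hcoarser) ?_
  refine MeasurableSpace.generateFrom_le ?_
  intro U hU
  have hLU : IsLindelof U := HereditarilyLindelof_LindelofSets U
  choose c hc hcl hcs using fun (x : X) (hx : x ∈ U) =>
    hbasis x U (hU.mem_nhds hx)
  obtain ⟨t, htc, hcov⟩ := hLU.elim_nhds_subcover' (fun x hx => c x hx)
    (fun x hx => hc x hx)
  have hUeq : U = ⋃ x ∈ t, c (x : X) x.2 := by
    refine Set.Subset.antisymm hcov ?_
    exact Set.iUnion₂_subset fun x _ => hcs x x.2
  rw [hUeq]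
  have hmeas : ∀ x : U, @MeasurableSet X (@borel X τ) (c (x : X) x.2) := by
    intro x
    have h1 : @MeasurableSet X (@borel X τ) (c (x : X) x.2)ᶜ :=
      .basic _ (hcl (x : X) x.2).isOpen_compl
    simpa using h1.compl
  exact MeasurableSet.biUnion htc fun x _ => hmeas x
end
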